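/- In a spherically symmetric spacetime in advanced coordinates, the Lie derivative of the metric along the Kodama vector ξ = e^{−β}∂_v is (£_ξ g)_{μν} = e^β (2/r)(∂m/∂v) ℓ_μ ℓ_ν − (∂β/∂r)(δ_μ^r ξ_ν + δ_ν^r ξ_μ), where ℓ_μdx^μ = −dv. Consequently, at any point q of a spacelike codimension-two surface S where the tangential projection of ξ vanishes, P^{μν}(£_ξ g)_{μν}|_q = e^β (2/r)(∂m/∂v) ℓ̄_A ℓ̄^A ≥ 0 whenever ∂m/∂v ≥ 0. -/

import Mathlib

noncomputable section

/-- The spherically symmetric metric ds² = −e^{2β}(1−2m/r)dv² + 2e^β dv dr + r²dΩ². -/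
def sphMetric (β m : ℝ → ℝ → ℝ) (v r θ : ℝ) : Matrix (Fin 4) (Fin 4) ℝ :=
  !![ -(Real.exp (2*β v r))*(1 - 2*m v r/r), Real.exp (β v r), 0, 0;
      Real.exp (β v r), 0, 0, 0;
      0, 0, r^2, 0;
      0, 0, 0, r^2*(Real.sin θ)^2 ]

/-- The Kodama vector field ξ = e^{−β}∂_v (contravariant components). -/
def kodamaUp (β : ℝ → ℝ → ℝ) (v r : ℝ) : Fin 4 → ℝ :=
  ![Real.exp (-(β v r)), 0, 0, 0]

/-- The lowered Kodama one-form ξ_μdx^μ = dr − e^β(1−2m/r)dv. -/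
def kodamaDown (β m : ℝ → ℝ → ℝ) (v r : ℝ) : Fin 4 → ℝ :=
  ![ -(Real.exp (β v r))*(1 - 2*m v r/r), 1, 0, 0]

/-- Coordinate partial derivative ∂_μ on φ-independent functions of (v,r,θ). -/
def D3 (μ : Fin 4) (f : ℝ → ℝ → ℝ → ℝ) (v r θ : ℝ) : ℝ :=
  if μ = 0 then deriv (fun s => f s r θ) v
  else if μ = 1 then deriv (fun s => f v s θ) r
  else if μ = 2 then deriv (fun s => f v r s) θ
  else 0

/-- The Lie derivative (£_ξ g)_{μν} = ξ^ρ∂_ρg_{μν} + g_{ρν}∂_μξ^ρ + g_{μρ}∂_νξ^ρ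
along the Kodama vector field. -/
def lieG (β m : ℝ → ℝ → ℝ) (v r θ : ℝ) (μ ν : Fin 4) : ℝ :=
  (∑ ρ, kodamaUp β v r ρ * D3 ρ (fun a b c => sphMetric β m a b c μ ν) v r θ)
  + (∑ ρ, sphMetric β m v r θ ρ ν * D3 μ (fun a b _ => kodamaUp β a b ρ) v r θ)
  + (∑ ρ, sphMetric β m v r θ μ ρ * D3 ν (fun a b _ => kodamaUp β a b ρ) v r θ)

/-- The ingoing null one-form ℓ_μdx^μ = −dv. -/
def lDown : Fin 4 → ℝ := ![-1, 0, 0, 0]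

/-- (£_ξ g)_{μν} = e^β(2/r)(∂m/∂v)ℓ_μℓ_ν − (∂β/∂r)(δ_μ^r ξ_ν + δ_ν^r ξ_μ);
consequently, at any point of a spacelike codimension-two surface S where the
tangential projection of ξ vanishes, P^{μν}(£_ξ g)_{μν} = e^β(2/r)(∂m/∂v) ℓ̄_Aℓ̄^A ≥ 0
whenever ∂m/∂v ≥ 0. -/
theorem lie_derivative_along_kodama
    (β m : ℝ → ℝ → ℝ)
    (hβ : ContDiff ℝ (⊤ : ℕ∞) (fun p : ℝ × ℝ => β p.1 p.2))
    (hm : ContDiff ℝ (⊤ : ℕ∞) (fun p : ℝ × ℝ => m p.1 p.2))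
    (v r θ : ℝ) (hr : 0 < r) :
    (∀ μ ν : Fin 4,
      lieG β m v r θ μ ν
        = Real.exp (β v r) * (2/r) * deriv (fun s => m s r) v * lDown μ * lDown ν
          - deriv (fun s => β v s) r *
            ((if μ = (1 : Fin 4) then (1:ℝ) else 0) * kodamaDown β m v r ν
             + (if ν = (1 : Fin 4) then (1:ℝ) else 0) * kodamaDown β m v r μ)) ∧
    (∀ (d : ℕ) (γinv : Matrix (Fin d) (Fin d) ℝ) (e : Fin d → Fin 4 → ℝ),
      γinv.PosSemidef →
      (∀ A, ∑ μ, kodamaDown β m v r μ * e A μ = 0) →  -- tangential projection of ξ vanishes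
      0 ≤ deriv (fun s => m s r) v →
      (∑ A, ∑ B, γinv A B * ∑ μ, ∑ ν, e A μ * e B ν * lieG β m v r θ μ ν)
        = Real.exp (β v r) * (2/r) * deriv (fun s => m s r) v *
            (∑ A, ∑ B, γinv A B * (∑ μ, lDown μ * e A μ) * (∑ ν, lDown ν * e B ν)) ∧
      0 ≤ ∑ A, ∑ B, γinv A B * ∑ μ, ∑ ν, e A μ * e B ν * lieG β m v r θ μ ν) := by
  have key1 : (∀ μ ν : Fin 4,
      lieG β m v r θ μ ν
        = Real.exp (β v r) * (2/r) * deriv (fun s => m s r) v * lDown μ * lDown ν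
          - deriv (fun s => β v s) r *
            ((if μ = (1 : Fin 4) then (1:ℝ) else 0) * kodamaDown β m v r ν
             + (if ν = (1 : Fin 4) then (1:ℝ) else 0) * kodamaDown β m v r μ)) := by
    have hbv : HasDerivAt (fun s => β s r) (deriv (fun s => β s r) v) v :=
      (((hβ.differentiable (by simp)).comp (differentiable_id.prodMk (differentiable_const r))) v).hasDerivAt
    have hbr : HasDerivAt (fun s => β v s) (deriv (fun s => β v s) r) r :=
      (((hβ.differentiable (by simp)).comp ((differentiable_const v).prodMk differentiable_id)) r).hasDerivAt
    have hmv : HasDerivAt (fun s => m s r) (deriv (fun s => m s r) v) v :=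
      (((hm.differentiable (by simp)).comp (differentiable_id.prodMk (differentiable_const r))) v).hasDerivAt
    set bv := deriv (fun s => β s r) v with hbvdef
    set br := deriv (fun s => β v s) r with hbrdef
    set mv := deriv (fun s => m s r) v with hmvdef
    have e1 : deriv (fun s => Real.exp (-(β s r))) v = -bv * Real.exp (-(β v r)) := by
      have : HasDerivAt (fun s => Real.exp (-(β s r))) (Real.exp (-(β v r)) * -bv) v := (hbv.neg.exp)
      rw [this.deriv]; ring
    have e2 : deriv (fun s => Real.exp (-(β v s))) r = -br * Real.exp (-(β v r)) := by
      have : HasDerivAt (fun s => Real.exp (-(β v s))) (Real.exp (-(β v r)) * -br) r := (hbr.neg.exp)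
      rw [this.deriv]; ring
    have e4 : deriv (fun s => Real.exp (β s r)) v = bv * Real.exp (β v r) := by
      rw [hbv.exp.deriv]; ring
    have e3 : deriv (fun s => Real.exp (2*β s r)*(1 - 2*m s r/r)) v
        = (2*bv*Real.exp (2*β v r))*(1-2*m v r/r) - Real.exp (2*β v r)*(2*mv/r) := by
      have h2b : HasDerivAt (fun s => Real.exp (2*β s r)) (Real.exp (2*β v r) * (2*bv)) v := by
        have := ((hbv.const_mul 2).exp)
        simpa using this
      have hM : HasDerivAt (fun s => 1 - 2*m s r/r) (-(2*mv/r)) v := by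
        have := ((hmv.const_mul 2).div_const r).const_sub 1
        simpa using this
      have : HasDerivAt (fun s => Real.exp (2*β s r)*(1 - 2*m s r/r)) _ v := (h2b.mul hM)
      rw [this.deriv]; ring
    intro μ ν
    fin_cases μ <;> fin_cases ν <;>
      simp [lieG, sphMetric, kodamaUp, kodamaDown, lDown, D3, Fin.sum_univ_four,
        e1, e2, e3, e4, Matrix.cons_val_zero, Matrix.cons_val_one, Matrix.head_cons] <;>
      first
      | ring1
      | (simp only [Real.exp_neg]
         field_simp
         try rw [show Real.exp (2 * β v r) = Real.exp (β v r)^2 from by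
              rw [show 2 * β v r = β v r + β v r by ring, Real.exp_add, sq]]
         ring1)
  refine ⟨key1, ?_⟩
  intro d γinv e hps htan hmv0
  set c := Real.exp (β v r) * (2/r) * deriv (fun s => m s r) v with hc
  have hkey : ∀ A B : Fin d, (∑ μ, ∑ ν, e A μ * e B ν * lieG β m v r θ μ ν)
      = c * ((∑ μ, lDown μ * e A μ) * (∑ ν, lDown ν * e B ν)) := by
    intro A B
    have hA := htan A
    have hB := htan B
    simp only [kodamaDown, Fin.sum_univ_four, Matrix.cons_val_zero, Matrix.cons_val_one,
      Matrix.head_cons, Matrix.cons_val_two, Matrix.tail_cons, Matrix.cons_val_three,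
      zero_mul, add_zero, one_mul] at hA hB
    simp only [key1]
    simp only [lDown, kodamaDown, Fin.sum_univ_four, Matrix.cons_val_zero, Matrix.cons_val_one,
      Matrix.head_cons, Matrix.cons_val_two, Matrix.tail_cons, Matrix.cons_val_three,
      Fin.isValue, Fin.reduceEq, if_true, if_false, ite_true, ite_false, one_ne_zero,
      reduceIte]
    set br := deriv (fun s => β v s) r
    linear_combination (-(br) * e A 1) * hB + (-(br) * e B 1) * hA
  have heq : (∑ A, ∑ B, γinv A B * ∑ μ, ∑ ν, e A μ * e B ν * lieG β m v r θ μ ν)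
      = c * (∑ A, ∑ B, γinv A B * (∑ μ, lDown μ * e A μ) * (∑ ν, lDown ν * e B ν)) := by
    rw [Finset.mul_sum]
    refine Finset.sum_congr rfl fun A _ => ?_
    rw [Finset.mul_sum]
    refine Finset.sum_congr rfl fun B _ => ?_
    rw [hkey A B]; ring
  have hquad : 0 ≤ ∑ A, ∑ B, γinv A B * (∑ μ, lDown μ * e A μ) * (∑ ν, lDown ν * e B ν) := by
    have h := hps.dotProduct_mulVec_nonneg (fun A => ∑ μ, lDown μ * e A μ)
    simp only [star_trivial, dotProduct, Matrix.mulVec] at h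
    refine le_of_le_of_eq h ?_
    refine Finset.sum_congr rfl fun A _ => ?_
    rw [Finset.mul_sum]
    exact Finset.sum_congr rfl fun B _ => by ring
  have hcnn : 0 ≤ c := by
    rw [hc]
    exact mul_nonneg (mul_nonneg (Real.exp_pos _).le (by positivity)) hmv0
  exact ⟨heq, heq ▸ mul_nonneg hcnn hquad⟩
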